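/- Let (F ∪ W, ⊐, h, ≻) be a matching game induced by a stable matching rule h on a many-to-many matching market in which every agent's preference is substitutable and satisfies the law of aggregate demand (LAD). Then an agent a ∈ F ∪ W satisfies the manipulability property with Blair order if and only if a satisfies the manipulability property. -/

import Mathlib

/-!
Common framework for many-to-many matching markets (Manasero–Oviedo,
"General Manipulability Theorem for a Matching Model").

Agents on each side have strict linear orders (strict total orders) over
finsets of the other side.  `Pref.Ch` is the choice function, selecting the
most preferred subset.
-/

/-- A strict preference of an agent over subsets of the (finite) set `α` of
potential partners: a strict total order on `Finset α`, where `gt S T` means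
`S` is strictly preferred to `T`. -/
structure Pref (α : Type*) [DecidableEq α] [Fintype α] where
  gt : Finset α → Finset α → Prop
  isSTO : IsStrictTotalOrder (Finset α) gt

namespace Pref

variable {α : Type*} [DecidableEq α] [Fintype α]

/-- The choice set `Ch(S, ≻)`: the `≻`-maximal subset of `S`. -/
noncomputable def Ch (p : Pref α) (S : Finset α) : Finset α := by
  classical
  haveI := p.isSTO
  haveI : IsStrictTotalOrder (Finset α) (Function.swap p.gt) := IsStrictTotalOrder.swap _
  exact @Finset.max' _ (linearOrderOfSTO (Function.swap p.gt)) S.powerset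
    ⟨∅, Finset.empty_mem_powerset S⟩

/-- Substitutability: if `w ∈ Ch(S)` then `w ∈ Ch(S \ {w'})` for any other `w' ∈ S`. -/
def Substitutable (p : Pref α) : Prop :=
  ∀ (S : Finset α) (w w' : α), w ∈ S → w' ∈ S → w ≠ w' →
    w ∈ p.Ch S → w ∈ p.Ch (S.erase w')

/-- Law of aggregate demand: `Y ⊆ X` implies `|Ch(Y)| ≤ |Ch(X)|`. -/
def LAD (p : Pref α) : Prop :=
  ∀ Y X : Finset α, Y ⊆ X → (p.Ch Y).card ≤ (p.Ch X).card

/-- `p.HasList L` : the sets in `L` are exactly the acceptable sets, in strictly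
decreasing order of preference and all preferred to `∅`; any set not in the
list (other than `∅`) is unacceptable, i.e. worse than `∅`. -/
def HasList (p : Pref α) (L : List (Finset α)) : Prop :=
  List.Chain' p.gt (L ++ [∅]) ∧ ∀ S : Finset α, S ∉ L → S ≠ ∅ → p.gt ∅ S

/-- `q`-separability of a preference with quota `q`. -/
def QSeparable (p : Pref α) (q : ℕ) : Prop :=
  (∀ S : Finset α, q < S.card → p.gt ∅ S) ∧
  (∀ (S : Finset α) (v : α), v ∉ S → S.card < q → (p.gt (insert v S) S ↔ p.gt {v} ∅))

end Pref

/-- `p'` is the restriction `p |_T` of `p` to `T`: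
(i) any set not contained in `T` is worse than `∅`;
(ii) for `S ⊆ T`, `S ≻' ∅ ↔ S ≻ ∅`;
(iii) for `S, S' ⊆ T`, `S ≻' S' ↔ S ≻ S'`. -/
def IsRestriction {α : Type*} [DecidableEq α] [Fintype α]
    (p : Pref α) (T : Finset α) (p' : Pref α) : Prop :=
  (∀ S : Finset α, ¬ S ⊆ T → p'.gt ∅ S) ∧
  (∀ S : Finset α, S ⊆ T → (p'.gt S ∅ ↔ p.gt S ∅)) ∧
  (∀ S S' : Finset α, S ⊆ T → S' ⊆ T → (p'.gt S S' ↔ p.gt S S'))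

variable (F W : Type*) [DecidableEq F] [Fintype F] [DecidableEq W] [Fintype W]

/-- A (many-to-many) matching between firms `F` and workers `W`. -/
structure Matching where
  fm : F → Finset W
  wm : W → Finset F
  compat : ∀ f w, w ∈ fm f ↔ f ∈ wm w

/-- A preference profile: one preference for each firm and each worker. -/
structure Profile where
  fp : F → Pref W
  wp : W → Pref F

variable {F W}

/-- All agents' preferences are substitutable. -/
def Profile.Substitutable (P : Profile F W) : Prop :=
  (∀ f, (P.fp f).Substitutable) ∧ (∀ w, (P.wp w).Substitutable)

/-- All agents' preferences satisfy the law of aggregate demand. -/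
def Profile.LAD (P : Profile F W) : Prop :=
  (∀ f, (P.fp f).LAD) ∧ (∀ w, (P.wp w).LAD)

/-- The profile obtained from `P` by replacing firm `f`'s preference by `p`. -/
def Profile.updateFirm (P : Profile F W) (f : F) (p : Pref W) : Profile F W :=
  ⟨Function.update P.fp f p, P.wp⟩

/-- The profile obtained from `P` by replacing worker `w`'s preference by `p`. -/
def Profile.updateWorker (P : Profile F W) (w : W) (p : Pref F) : Profile F W :=
  ⟨P.fp, Function.update P.wp w p⟩

/-- Individual rationality: every agent chooses its whole assignment. -/
def IndRational (P : Profile F W) (μ : Matching F W) : Prop :=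
  (∀ f, (P.fp f).Ch (μ.fm f) = μ.fm f) ∧ (∀ w, (P.wp w).Ch (μ.wm w) = μ.wm w)

/-- The pair `(w, f)` blocks the matching `μ`. -/
def Blocks (P : Profile F W) (μ : Matching F W) (w : W) (f : F) : Prop :=
  w ∉ μ.fm f ∧ w ∈ (P.fp f).Ch (insert w (μ.fm f)) ∧ f ∈ (P.wp w).Ch (insert f (μ.wm w))

/-- (Pairwise) stability. -/
def Stable (P : Profile F W) (μ : Matching F W) : Prop :=
  IndRational P μ ∧ ∀ w f, ¬ Blocks P μ w f

/-- `μF` is the firm-optimal stable matching for `P`. -/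
def FirmOptimal (P : Profile F W) (μF : Matching F W) : Prop :=
  Stable P μF ∧ ∀ μ, Stable P μ → ∀ f, μF.fm f = μ.fm f ∨ (P.fp f).gt (μF.fm f) (μ.fm f)

/-- `μW` is the worker-optimal stable matching for `P`. -/
def WorkerOptimal (P : Profile F W) (μW : Matching F W) : Prop :=
  Stable P μW ∧ ∀ μ, Stable P μ → ∀ w, μW.wm w = μ.wm w ∨ (P.wp w).gt (μW.wm w) (μ.wm w)

/-- Firm `f` satisfies the manipulability property (w.r.t. the rule `h`, the true
profile `P` and the firm-optimal stable matching `μF`): if `h(≻)(f) ≠ μF(≻)(f)`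
then some report `≻'_f` (in the domain: substitutable and LAD) gives `f` a
strictly `≻_f`-better assignment. -/
def FirmManip (h : Profile F W → Matching F W) (P : Profile F W)
    (μF : Matching F W) (f : F) : Prop :=
  (h P).fm f ≠ μF.fm f → ∃ p' : Pref W, p'.Substitutable ∧ p'.LAD ∧
    (P.fp f).gt ((h (P.updateFirm f p')).fm f) ((h P).fm f)

/-- Firm `f` satisfies the manipulability property with Blair order. -/
def FirmManipB (h : Profile F W → Matching F W) (P : Profile F W)
    (μF : Matching F W) (f : F) : Prop :=
  (h P).fm f ≠ μF.fm f → ∃ p' : Pref W, p'.Substitutable ∧ p'.LAD ∧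
    ((P.fp f).Ch ((h (P.updateFirm f p')).fm f ∪ (h P).fm f) = (h (P.updateFirm f p')).fm f ∧
      (h (P.updateFirm f p')).fm f ≠ (h P).fm f)

/-- Worker `w` satisfies the manipulability property. -/
def WorkerManip (h : Profile F W → Matching F W) (P : Profile F W)
    (μW : Matching F W) (w : W) : Prop :=
  (h P).wm w ≠ μW.wm w → ∃ p' : Pref F, p'.Substitutable ∧ p'.LAD ∧
    (P.wp w).gt ((h (P.updateWorker w p')).wm w) ((h P).wm w)

/-- Worker `w` satisfies the manipulability property with Blair order. -/
def WorkerManipB (h : Profile F W → Matching F W) (P : Profile F W)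
    (μW : Matching F W) (w : W) : Prop :=
  (h P).wm w ≠ μW.wm w → ∃ p' : Pref F, p'.Substitutable ∧ p'.LAD ∧
    ((P.wp w).Ch ((h (P.updateWorker w p')).wm w ∪ (h P).wm w) = (h (P.updateWorker w p')).wm w ∧
      (h (P.updateWorker w p')).wm w ≠ (h P).wm w)

/-!
If `h` does not give firm `f` its firm-optimal assignment `M = μF(f)`, let `f` report the
truncation of its preference to `M`. The firm-optimal matching stays stable under this report, so
by the rural hospitals theorem every stable matching of the new market gives `f` a subset of `M`
of size `|M|`, that is, `M` itself. The firm-optimal matching is also Blair-optimal, so `M` is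
Blair-better for `f` than `h(≻)(f)`, and a Blair improvement is a strict improvement. Hence both
properties hold for every agent; workers are handled by exchanging the two sides.

Blair-optimality and the rural hospitals theorem come from the least fixed point of the
deferred-acceptance operator on menus (Hatfield–Milgrom): substitutability makes the operator
monotone, and LAD compares the sizes of choices from nested menus.
-/

namespace Pref

variable {α : Type*} [DecidableEq α] [Fintype α] (p : Pref α)

theorem gt_asymm {S T : Finset α} (h : p.gt S T) : ¬ p.gt T S :=
  have := p.isSTO
  asymm h

theorem ch_spec (S : Finset α) : p.Ch S ⊆ S ∧ ∀ T ⊆ S, T = p.Ch S ∨ p.gt (p.Ch S) T := by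
  classical
  have := p.isSTO
  let := linearOrderOfSTO (Function.swap p.gt)
  unfold Ch
  exact ⟨by simpa using Finset.max'_mem S.powerset ⟨∅, Finset.empty_mem_powerset S⟩,
    fun T hT => Finset.le_max' S.powerset T (Finset.mem_powerset.2 hT)⟩

theorem ch_subset (S : Finset α) : p.Ch S ⊆ S := (p.ch_spec S).1

theorem ch_gt {S T : Finset α} (hT : T ⊆ S) (hne : T ≠ p.Ch S) : p.gt (p.Ch S) T :=
  ((p.ch_spec S).2 T hT).resolve_left hne

theorem eq_ch_of_forall_gt {S U : Finset α} (hU : U ⊆ S) (h : ∀ T ⊆ S, T ≠ U → p.gt U T) :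
    U = p.Ch S := by
  by_contra hne
  exact p.gt_asymm (p.ch_gt hU hne) (h _ (p.ch_subset S) (Ne.symm hne))

theorem ch_eq_of_subset {S T : Finset α} (h₁ : p.Ch S ⊆ T) (h₂ : T ⊆ S) : p.Ch T = p.Ch S :=
  (p.eq_ch_of_forall_gt h₁ fun _ hR hne => p.ch_gt (hR.trans h₂) hne).symm

theorem ch_ch (S : Finset α) : p.Ch (p.Ch S) = p.Ch S :=
  p.ch_eq_of_subset subset_rfl (p.ch_subset S)

theorem mem_ch_of_mem_ch_insert_ch {S : Finset α} {x : α} (hx : x ∈ S)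
    (h : x ∈ p.Ch (insert x (p.Ch S))) : x ∈ p.Ch S := by
  rwa [p.ch_eq_of_subset (Finset.subset_insert _ _)
    (Finset.insert_subset hx (p.ch_subset S))] at h

theorem gt_of_ch_union_eq {A B : Finset α} (h : p.Ch (A ∪ B) = A) (hne : A ≠ B) : p.gt A B := by
  have := p.ch_gt (S := A ∪ B) Finset.subset_union_right (by rw [h]; exact hne.symm)
  rwa [h] at this

theorem Substitutable.mem_ch_of_subset {p : Pref α} (hp : p.Substitutable) {S T : Finset α}
    {x : α} (hTS : T ⊆ S) (hx : x ∈ T) (h : x ∈ p.Ch S) : x ∈ p.Ch T := by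
  induction S using Finset.strongInduction generalizing T with
  | _ S ih =>
    rcases hTS.eq_or_ssubset with rfl | hss
    · exact h
    obtain ⟨y, hyS, hyT⟩ := Finset.exists_of_ssubset hss
    have hxy : x ≠ y := fun hxy => hyT (hxy ▸ hx)
    exact ih _ (Finset.erase_ssubset hyS)
      (fun z hz => Finset.mem_erase.2 ⟨fun hzy => hyT (hzy ▸ hz), hTS hz⟩) hx
      (hp S x y (hTS hx) hyS hxy h)

/-- The paper's truncation `≻|_T`: subsets of `T` keep their order and beat all other sets. -/
def restrict (T : Finset α) : Pref α where
  gt S S' := (S ⊆ T ∧ ¬ S' ⊆ T) ∨ ((S ⊆ T ↔ S' ⊆ T) ∧ p.gt S S')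
  isSTO :=
    have := p.isSTO
    { trichotomous := fun S S' h₁ h₂ => by
        rcases trichotomous_of p.gt S S' with h | h | h <;> tauto
      irrefl := fun S h => by
        rcases h with ⟨h₁, h₂⟩ | ⟨_, h⟩
        exacts [h₂ h₁, irrefl S h]
      trans := fun S S' S'' h₁ h₂ => by
        have := trans_of p.gt (a := S) (b := S') (c := S'')
        tauto }

theorem restrict_ch (T S : Finset α) : (p.restrict T).Ch S = p.Ch (S ∩ T) := by
  refine ((p.restrict T).eq_ch_of_forall_gt ((p.ch_subset _).trans Finset.inter_subset_left)
    fun R hR hne => ?_).symm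
  have hchT : p.Ch (S ∩ T) ⊆ T := (p.ch_subset _).trans Finset.inter_subset_right
  by_cases hRT : R ⊆ T
  · exact Or.inr ⟨by tauto, p.ch_gt (Finset.subset_inter hR hRT) hne⟩
  · exact Or.inl ⟨hchT, hRT⟩

variable {p}

theorem Substitutable.restrict (hp : p.Substitutable) (T : Finset α) :
    (p.restrict T).Substitutable := by
  intro S x y hxS hyS hxy hx
  rw [restrict_ch] at hx ⊢
  rw [Finset.erase_inter]
  by_cases hy : y ∈ S ∩ T
  · exact hp _ x y (p.ch_subset _ hx) hy hxy hx
  · rwa [Finset.erase_eq_of_notMem hy]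

theorem LAD.restrict (hp : p.LAD) (T : Finset α) : (p.restrict T).LAD := by
  intro Y X hYX
  rw [restrict_ch, restrict_ch]
  exact hp _ _ (Finset.inter_subset_inter_right hYX)

end Pref

def Profile.flip (P : Profile F W) : Profile W F := ⟨P.wp, P.fp⟩

def Matching.flip {A B : Type*} (μ : Matching A B) : Matching B A :=
  ⟨μ.wm, μ.fm, fun b a => (μ.compat a b).symm⟩

theorem Profile.Substitutable.flip {P : Profile F W} (hs : P.Substitutable) :
    P.flip.Substitutable :=
  ⟨hs.2, hs.1⟩

theorem Profile.LAD.flip {P : Profile F W} (hl : P.LAD) : P.flip.LAD :=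
  ⟨hl.2, hl.1⟩

theorem Stable.flip {P : Profile F W} {μ : Matching F W} (hst : Stable P μ) :
    Stable P.flip μ.flip :=
  ⟨⟨hst.1.2, hst.1.1⟩, fun f w ⟨hnm, hbf, hbw⟩ =>
    hst.2 w f ⟨fun hc => hnm ((μ.compat f w).1 hc), hbw, hbf⟩⟩

theorem WorkerOptimal.flip {P : Profile F W} {μW : Matching F W} (hW : WorkerOptimal P μW) :
    FirmOptimal P.flip μW.flip :=
  ⟨hW.1.flip, fun μ hμ => hW.2 μ.flip hμ.flip⟩

open Finset

/-- Given the sets `E w` of firms that have not been rejected by `w`, firm `f` may propose to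
every worker `w` that would not reject it. Applied to `P.flip` it gives the workers' side. -/
noncomputable def firmMenus (P : Profile F W) (E : W → Finset F) : F → Finset W :=
  fun f => univ.filter fun w => f ∈ E w → f ∈ (P.wp w).Ch (E w)

theorem mem_firmMenus {P : Profile F W} {E : W → Finset F} {f : F} {w : W} :
    w ∈ firmMenus P E f ↔ (f ∈ E w → f ∈ (P.wp w).Ch (E w)) := by
  simp [firmMenus]

theorem firmMenus_antitone {P : Profile F W} (hs : ∀ w, (P.wp w).Substitutable) :
    Antitone (firmMenus P) := fun E E' hEE' f w hw => by
  rw [mem_firmMenus] at hw ⊢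
  exact fun hf => (hs w).mem_ch_of_subset (hEE' w) hf (hw (hEE' w hf))

section FixedPoint

variable {P : Profile F W} {D : F → Finset W} {E : W → Finset F}

theorem mem_ch_of_mem_ch_of_menus (hD : firmMenus P E = D) (hE : firmMenus P.flip D = E)
    {f : F} {w : W} (h : w ∈ (P.fp f).Ch (D f)) : f ∈ (P.wp w).Ch (E w) := by
  have hw : w ∈ D f := (P.fp f).ch_subset _ h
  have hf : f ∈ E w := by
    rw [← hE, mem_firmMenus]
    exact fun _ => h
  rw [← hD, mem_firmMenus] at hw
  exact hw hf

noncomputable def matchingOfMenus (P : Profile F W) (D : F → Finset W) (E : W → Finset F)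
    (hD : firmMenus P E = D) (hE : firmMenus P.flip D = E) : Matching F W :=
  ⟨fun f => (P.fp f).Ch (D f), fun w => (P.wp w).Ch (E w), fun _ _ =>
    ⟨mem_ch_of_mem_ch_of_menus hD hE, mem_ch_of_mem_ch_of_menus (P := P.flip) hE hD⟩⟩

theorem stable_matchingOfMenus (hD : firmMenus P E = D) (hE : firmMenus P.flip D = E) :
    Stable P (matchingOfMenus P D E hD hE) := by
  refine ⟨⟨fun f => (P.fp f).ch_ch _, fun w => (P.wp w).ch_ch _⟩, ?_⟩
  rintro w f ⟨hnm, hbf, hbw⟩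
  by_cases hwD : w ∈ D f
  · exact hnm ((P.fp f).mem_ch_of_mem_ch_insert_ch hwD hbf)
  · rw [← hD, mem_firmMenus, Classical.not_imp] at hwD
    exact hwD.2 ((P.wp w).mem_ch_of_mem_ch_insert_ch hwD.1 hbw)

end FixedPoint

section MenusOfStable

variable {P : Profile F W} {μ : Matching F W}

noncomputable def firmMenuOf (P : Profile F W) (μ : Matching F W) : F → Finset W :=
  fun f => univ.filter fun w => f ∈ (P.wp w).Ch (insert f (μ.wm w))

noncomputable def workerMenuOf (P : Profile F W) (μ : Matching F W) : W → Finset F :=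
  firmMenus P.flip (firmMenuOf P μ)

theorem mem_ch_insert_of_mem (hIR : IndRational P μ) {f : F} {w : W} (hf : f ∈ μ.wm w) :
    f ∈ (P.wp w).Ch (insert f (μ.wm w)) := by
  rwa [Finset.insert_eq_self.2 hf, hIR.2 w]

theorem fm_subset_firmMenuOf (hIR : IndRational P μ) (f : F) : μ.fm f ⊆ firmMenuOf P μ f :=
  fun w hw => by simpa [firmMenuOf] using mem_ch_insert_of_mem hIR ((μ.compat f w).1 hw)

theorem ch_firmMenuOf (hs : ∀ f, (P.fp f).Substitutable) (hst : Stable P μ) (f : F) :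
    (P.fp f).Ch (firmMenuOf P μ f) = μ.fm f := by
  have hsub := fm_subset_firmMenuOf hst.1 f
  have hch : (P.fp f).Ch (firmMenuOf P μ f) ⊆ μ.fm f := by
    intro w hw
    by_contra hnm
    have hwD : w ∈ firmMenuOf P μ f := (P.fp f).ch_subset _ hw
    refine hst.2 w f ⟨hnm, ?_, by simpa [firmMenuOf] using hwD⟩
    exact (hs f).mem_ch_of_subset (Finset.insert_subset hwD hsub) (Finset.mem_insert_self w _) hw
  rw [← (P.fp f).ch_eq_of_subset hch hsub, hst.1.1 f]

theorem mem_workerMenuOf (hs : ∀ f, (P.fp f).Substitutable) (hst : Stable P μ) {f : F}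
    {w : W} : f ∈ workerMenuOf P μ w ↔ (f ∈ (P.wp w).Ch (insert f (μ.wm w)) → f ∈ μ.wm w) := by
  rw [workerMenuOf, mem_firmMenus]
  change (w ∈ firmMenuOf P μ f → w ∈ (P.fp f).Ch (firmMenuOf P μ f)) ↔ _
  rw [ch_firmMenuOf hs hst, μ.compat]
  simp [firmMenuOf]

theorem ch_workerMenuOf (hs : P.Substitutable) (hst : Stable P μ) (w : W) :
    (P.wp w).Ch (workerMenuOf P μ w) = μ.wm w := by
  have hsub : μ.wm w ⊆ workerMenuOf P μ w :=
    fun f hf => (mem_workerMenuOf hs.1 hst).2 fun _ => hf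
  have hch : (P.wp w).Ch (workerMenuOf P μ w) ⊆ μ.wm w := by
    intro f hf
    have hfE : f ∈ workerMenuOf P μ w := (P.wp w).ch_subset _ hf
    exact (mem_workerMenuOf hs.1 hst).1 hfE <|
      (hs.2 w).mem_ch_of_subset (Finset.insert_subset hfE hsub) (Finset.mem_insert_self f _) hf
  rw [← (P.wp w).ch_eq_of_subset hch hsub, hst.1.2 w]

theorem firmMenus_workerMenuOf (hs : P.Substitutable) (hst : Stable P μ) :
    firmMenus P (workerMenuOf P μ) = firmMenuOf P μ := by
  ext f w
  have := mem_ch_insert_of_mem hst.1 (f := f) (w := w)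
  simp only [mem_firmMenus, ch_workerMenuOf hs hst, mem_workerMenuOf hs.1 hst, firmMenuOf,
    Finset.mem_filter, Finset.mem_univ, true_and]
  tauto

end MenusOfStable

section FirmDominant

variable {P : Profile F W}

attribute [local instance] Fintype.toCompleteLattice

/-- One round of deferred acceptance on the sets of firms not yet rejected by each worker. -/
noncomputable def offerStep (hs : P.Substitutable) : (W → Finset F) →o (W → Finset F) :=
  ⟨fun E => firmMenus P.flip (firmMenus P E),
    Antitone.comp (firmMenus_antitone (P := P.flip) hs.1) (firmMenus_antitone hs.2)⟩

theorem exists_stable_forall_firm_dominant (hs : P.Substitutable) (hl : P.LAD) :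
    ∃ ρ : Matching F W, Stable P ρ ∧ ∀ μ, Stable P μ →
      (∀ f, (P.fp f).Ch (ρ.fm f ∪ μ.fm f) = ρ.fm f) ∧
      (∀ f, #(μ.fm f) ≤ #(ρ.fm f)) ∧ (∀ w, #(ρ.wm w) ≤ #(μ.wm w)) := by
  set E₀ := OrderHom.lfp (offerStep hs)
  have hE₀ : firmMenus P.flip (firmMenus P E₀) = E₀ := OrderHom.map_lfp (offerStep hs)
  refine ⟨matchingOfMenus P _ E₀ rfl hE₀, stable_matchingOfMenus rfl hE₀, fun μ hst => ?_⟩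
  have hE : E₀ ≤ workerMenuOf P μ := OrderHom.lfp_le_fixed (offerStep hs) <| by
    change firmMenus P.flip (firmMenus P (workerMenuOf P μ)) = _
    rw [firmMenus_workerMenuOf hs hst]
    rfl
  have hD : firmMenuOf P μ ≤ firmMenus P E₀ :=
    firmMenus_workerMenuOf hs hst ▸ firmMenus_antitone hs.2 hE
  refine ⟨fun f => (P.fp f).ch_eq_of_subset Finset.subset_union_left
      (Finset.union_subset ((P.fp f).ch_subset _) ((fm_subset_firmMenuOf hst.1 f).trans (hD f))),
    fun f => ?_, fun w => ?_⟩
  · rw [← ch_firmMenuOf hs.1 hst f]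
    exact hl.1 f _ _ (hD f)
  · rw [← ch_workerMenuOf hs hst w]
    exact hl.2 w _ _ (hE w)

end FirmDominant

theorem Matching.sum_card_fm_eq_sum_card_wm {A B : Type*} [Fintype A] [Fintype B]
    (μ : Matching A B) : ∑ a, #(μ.fm a) = ∑ b, #(μ.wm b) := by
  classical
  convert sum_card_bipartiteAbove_eq_sum_card_bipartiteBelow (s := univ) (t := univ)
    fun a b => b ∈ μ.fm a using 3 <;> ext <;> simp [bipartiteAbove, bipartiteBelow, μ.compat]

theorem Matching.card_fm_eq_of_le {A B : Type*} [Fintype A] [Fintype B] {μ ν : Matching A B}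
    (hfm : ∀ a, #(μ.fm a) ≤ #(ν.fm a)) (hwm : ∀ b, #(ν.wm b) ≤ #(μ.wm b)) (a : A) :
    #(μ.fm a) = #(ν.fm a) := by
  have hsum : ∑ a, #(μ.fm a) = ∑ a, #(ν.fm a) := by
    refine le_antisymm (sum_le_sum fun a _ => hfm a) ?_
    rw [μ.sum_card_fm_eq_sum_card_wm, ν.sum_card_fm_eq_sum_card_wm]
    exact sum_le_sum fun b _ => hwm b
  exact (sum_eq_sum_iff_of_le fun a _ => hfm a).1 hsum a (mem_univ a)

section RuralHospitals

variable {P : Profile F W}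

theorem Stable.card_fm_eq (hs : P.Substitutable) (hl : P.LAD) {μ ν : Matching F W}
    (hμ : Stable P μ) (hν : Stable P ν) (f : F) : #(μ.fm f) = #(ν.fm f) := by
  obtain ⟨ρ, -, hρ⟩ := exists_stable_forall_firm_dominant hs hl
  have hcard {μ} (hμ : Stable P μ) := Matching.card_fm_eq_of_le (hρ μ hμ).2.1 (hρ μ hμ).2.2 f
  rw [hcard hμ, hcard hν]

theorem FirmOptimal.ch_union_eq (hs : P.Substitutable) (hl : P.LAD) {μF μ : Matching F W}
    (hF : FirmOptimal P μF) (hμ : Stable P μ) (f : F) :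
    (P.fp f).Ch (μF.fm f ∪ μ.fm f) = μF.fm f := by
  obtain ⟨ρ, hρ, hρdom⟩ := exists_stable_forall_firm_dominant hs hl
  have hρF : ρ.fm f = μF.fm f := by
    by_contra hne
    have hgt := (P.fp f).gt_of_ch_union_eq ((hρdom μF hF.1).1 f) hne
    rcases hF.2 ρ hρ f with heq | hlt
    exacts [hne heq.symm, (P.fp f).gt_asymm hgt hlt]
  rw [← hρF]
  exact (hρdom μ hμ).1 f

end RuralHospitals

theorem Profile.Substitutable.updateFirm {P : Profile F W} (hs : P.Substitutable) {p : Pref W}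
    (hp : p.Substitutable) (f : F) : (P.updateFirm f p).Substitutable := by
  refine ⟨fun g => ?_, hs.2⟩
  rcases eq_or_ne g f with rfl | hg
  · simpa [Profile.updateFirm] using hp
  · simpa [Profile.updateFirm, hg] using hs.1 g

theorem Profile.LAD.updateFirm {P : Profile F W} (hl : P.LAD) {p : Pref W} (hp : p.LAD)
    (f : F) : (P.updateFirm f p).LAD := by
  refine ⟨fun g => ?_, hl.2⟩
  rcases eq_or_ne g f with rfl | hg
  · simpa [Profile.updateFirm] using hp
  · simpa [Profile.updateFirm, hg] using hl.1 g

section Truncation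

variable {P : Profile F W} {μ : Matching F W}

theorem Stable.updateFirm_restrict (hst : Stable P μ) (f : F) :
    Stable (P.updateFirm f ((P.fp f).restrict (μ.fm f))) μ := by
  refine ⟨⟨fun g => ?_, hst.1.2⟩, fun w g ⟨hnm, hbf, hbw⟩ => ?_⟩
  · rcases eq_or_ne g f with rfl | hg
    · simpa [Profile.updateFirm, Pref.restrict_ch] using hst.1.1 g
    · simpa [Profile.updateFirm, hg] using hst.1.1 g
  · rcases eq_or_ne g f with rfl | hg
    · simp only [Profile.updateFirm, Function.update_self, Pref.restrict_ch] at hbf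
      exact hnm (Finset.inter_subset_right ((P.fp g).ch_subset _ hbf))
    · simp only [Profile.updateFirm, Function.update_of_ne hg] at hbf
      exact hst.2 w g ⟨hnm, hbf, hbw⟩

theorem fm_eq_of_stable_updateFirm_restrict (hs : P.Substitutable) (hl : P.LAD)
    (hst : Stable P μ) {f : F} {ν : Matching F W}
    (hν : Stable (P.updateFirm f ((P.fp f).restrict (μ.fm f))) ν) : ν.fm f = μ.fm f := by
  have hsub : ν.fm f ⊆ μ.fm f := by
    have hIR := hν.1.1 f
    simp only [Profile.updateFirm, Function.update_self, Pref.restrict_ch] at hIR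
    exact hIR ▸ ((P.fp f).ch_subset _).trans Finset.inter_subset_right
  refine Finset.eq_of_subset_of_card_le hsub (le_of_eq ?_)
  exact (hst.updateFirm_restrict f).card_fm_eq (hs.updateFirm ((hs.1 f).restrict _) f)
    (hl.updateFirm ((hl.1 f).restrict _) f) hν f

end Truncation

section Manipulation

variable {P : Profile F W} {h : Profile F W → Matching F W} {μF : Matching F W}

theorem FirmManipB.firmManip {f : F} (hB : FirmManipB h P μF f) : FirmManip h P μF f :=
  fun hne =>
    let ⟨p', hs, hl, hch, hne'⟩ := hB hne
    ⟨p', hs, hl, (P.fp f).gt_of_ch_union_eq hch hne'⟩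

theorem firmManipB (hs : P.Substitutable) (hl : P.LAD)
    (hrule : ∀ P' : Profile F W, P'.Substitutable → P'.LAD → Stable P' (h P'))
    (hF : FirmOptimal P μF) (f : F) : FirmManipB h P μF f := by
  intro hne
  refine ⟨(P.fp f).restrict (μF.fm f), (hs.1 f).restrict _, (hl.1 f).restrict _, ?_⟩
  have hQ := hrule _ (hs.updateFirm ((hs.1 f).restrict (μF.fm f)) f)
    (hl.updateFirm ((hl.1 f).restrict (μF.fm f)) f)
  rw [fm_eq_of_stable_updateFirm_restrict hs hl hF.1 hQ]
  exact ⟨hF.ch_union_eq hs hl (hrule P hs hl) f, hne.symm⟩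

theorem firmManipB_iff_firmManip (hs : P.Substitutable) (hl : P.LAD)
    (hrule : ∀ P' : Profile F W, P'.Substitutable → P'.LAD → Stable P' (h P'))
    (hF : FirmOptimal P μF) (f : F) : FirmManipB h P μF f ↔ FirmManip h P μF f :=
  ⟨FirmManipB.firmManip, fun _ => firmManipB hs hl hrule hF f⟩

end Manipulation

/-- Proposition 3 of the paper.  In the matching game induced by a
stable matching rule `h` on a market with substitutable and LAD preferences, an
agent satisfies the manipulability property with Blair order if and only if it
satisfies the manipulability property. -/
theorem stmt4 {F W : Type*} [DecidableEq F] [Fintype F] [DecidableEq W] [Fintype W]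
    (P : Profile F W) (hsub : P.Substitutable) (hlad : P.LAD)
    (h : Profile F W → Matching F W)
    (hrule : ∀ P' : Profile F W, P'.Substitutable → P'.LAD → Stable P' (h P'))
    (μF μW : Matching F W) (hF : FirmOptimal P μF) (hW : WorkerOptimal P μW) :
    (∀ f : F, FirmManipB h P μF f ↔ FirmManip h P μF f) ∧
    (∀ w : W, WorkerManipB h P μW w ↔ WorkerManip h P μW w) :=
  ⟨firmManipB_iff_firmManip hsub hlad hrule hF,
    firmManipB_iff_firmManip (h := fun Q => (h Q.flip).flip) hsub.flip hlad.flip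
      (fun Q hQs hQl => (hrule Q.flip hQs.flip hQl.flip).flip) hW.flip⟩
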